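/- arXiv:2304.10356 — 4 statements merged into one kernel-verified Lean document; each statement's English description precedes it below -/
import Mathlib

section
/- Assume mild ill-posedness: $c_{\min} k^{-a} \le \lambda_k \le c_{\max} k^{-a}$ for all $k \in \mathbb{N}$ with $a > 1$. Then for the spectral cutoff filter $q_\alpha(\lambda) = \lambda^{-1}\mathbf{1}\{\lambda \ge \alpha\}$ there exist constants $0 < c \le C$ such that for all sufficiently small $\alpha > 0$: $c\, \alpha^{-(a+1)/a} \le \sum_{k=1}^\infty \lambda_k q_\alpha(\lambda_k)^2 \le C\, \alpha^{-(a+1)/a}$. -/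
/-!
Only the indices with `α ≤ λ_k` contribute, each with `1 / λ_k ≍ (k + 1) ^ a`. Since
`λ_k ≍ (k + 1) ^ (-a)`, these indices include all `k + 1 ≤ (cmin / α) ^ (1 / a)` and are contained
in `k + 1 ≤ (cmax / α) ^ (1 / a)`; so there are `N(α) ≍ α ^ (-1 / a)` of them. The sum is at most
`N(α)` times its largest term, `≍ α ^ (-1 / a) · α⁻¹`, and at least `cmax⁻¹ ∑_{k < N} (k + 1) ^ a`
with `N = ⌊(cmin / α) ^ (1 / a)⌋`; this sum dominates `∫₀ᴺ x ^ a dx = N ^ (a + 1) / (a + 1)`.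
-/

noncomputable def cutoffFilter (α x : ℝ) : ℝ := if α ≤ x then 1 / x else 0

open Finset Real

lemma mul_cutoffFilter_sq (α x : ℝ) :
    x * cutoffFilter α x ^ 2 = if α ≤ x then x⁻¹ else 0 := by
  unfold cutoffFilter
  split_ifs
  · rcases eq_or_ne x 0 with rfl | hx
    · simp
    · field_simp
  · simp

lemma le_mul_rpow_neg_iff {α c a x : ℝ} (hα : 0 < α) (hc : 0 ≤ c) (ha : 0 < a) (hx : 0 < x) :
    α ≤ c * x ^ (-a) ↔ x ≤ (c / α) ^ a⁻¹ := by
  rw [rpow_neg hx.le, ← div_eq_mul_inv, le_div_iff₀ (rpow_pos_of_pos hx a), ← le_div_iff₀' hα,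
    le_rpow_inv_iff_of_pos hx.le (div_nonneg hc hα.le) ha]

lemma inv_mul_rpow_neg {c x : ℝ} (a : ℝ) (hx : 0 ≤ x) : (c * x ^ (-a))⁻¹ = c⁻¹ * x ^ a := by
  rw [mul_inv, rpow_neg hx, inv_inv]

lemma div_rpow_inv_rpow_add_one {c α a : ℝ} (hc : 0 ≤ c) (hα : 0 ≤ α) :
    ((c / α) ^ a⁻¹) ^ (a + 1) = c ^ ((a + 1) / a) * α ^ (-(a + 1) / a) := by
  rw [← rpow_mul (div_nonneg hc hα), inv_mul_eq_div, div_rpow hc hα, neg_div, rpow_neg hα,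
    div_eq_mul_inv]

lemma half_le_natFloor {x : ℝ} (hx : 1 ≤ x) : x / 2 ≤ ⌊x⌋₊ := by
  have h1 : (1 : ℝ) ≤ ⌊x⌋₊ := by exact_mod_cast Nat.one_le_floor_iff x |>.2 hx
  linarith [Nat.sub_one_lt_floor x]

lemma rpow_add_one_div_le_sum_range {a : ℝ} (ha : 0 ≤ a) (N : ℕ) :
    (N : ℝ) ^ (a + 1) / (a + 1) ≤ ∑ k ∈ range N, ((k : ℝ) + 1) ^ a := by
  have hmono : MonotoneOn (fun x : ℝ ↦ x ^ a) (Set.Icc 0 (0 + N)) :=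
    fun x hx y _ hxy ↦ rpow_le_rpow hx.1 hxy ha
  have := hmono.integral_le_sum
  rw [zero_add, integral_rpow (Or.inl (by linarith)), zero_rpow (by linarith), sub_zero] at this
  simpa using this

noncomputable def cutoffVariance (lam : ℕ → ℝ) (α : ℝ) : ℝ :=
  ∑' k, lam k * cutoffFilter α (lam k) ^ 2

section
variable {lam : ℕ → ℝ} {a α cmin cmax : ℝ}

lemma mul_cutoffFilter_sq_eq_zero_of_natFloor_le (hα : 0 < α) (ha : 0 < a) (hcmax : 0 ≤ cmax)
    (hup : ∀ k : ℕ, lam k ≤ cmax * ((k : ℝ) + 1) ^ (-a)) {k : ℕ}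
    (hk : ⌊(cmax / α) ^ a⁻¹⌋₊ ≤ k) : lam k * cutoffFilter α (lam k) ^ 2 = 0 := by
  rw [mul_cutoffFilter_sq, if_neg]
  intro hαk
  have hkM := (le_mul_rpow_neg_iff hα hcmax ha (by positivity)).1 (hαk.trans (hup k))
  have : k + 1 ≤ ⌊(cmax / α) ^ a⁻¹⌋₊ := Nat.le_floor (by exact_mod_cast hkM)
  omega

lemma cutoffVariance_eq_sum (hα : 0 < α) (ha : 0 < a) (hcmax : 0 ≤ cmax)
    (hup : ∀ k : ℕ, lam k ≤ cmax * ((k : ℝ) + 1) ^ (-a)) :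
    cutoffVariance lam α =
      ∑ k ∈ range ⌊(cmax / α) ^ a⁻¹⌋₊, lam k * cutoffFilter α (lam k) ^ 2 :=
  tsum_eq_sum fun _ hk ↦
    mul_cutoffFilter_sq_eq_zero_of_natFloor_le hα ha hcmax hup (by simpa using hk)

lemma summable_mul_cutoffFilter_sq (hα : 0 < α) (ha : 0 < a) (hcmax : 0 ≤ cmax)
    (hup : ∀ k : ℕ, lam k ≤ cmax * ((k : ℝ) + 1) ^ (-a)) :
    Summable fun k ↦ lam k * cutoffFilter α (lam k) ^ 2 :=
  summable_of_ne_finset_zero (s := range ⌊(cmax / α) ^ a⁻¹⌋₊) fun _ hk ↦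
    mul_cutoffFilter_sq_eq_zero_of_natFloor_le hα ha hcmax hup (by simpa using hk)

lemma cutoffVariance_le (hα : 0 < α) (ha : 0 < a) (hcmin : 0 < cmin) (hcmax : 0 ≤ cmax)
    (hl : ∀ k : ℕ, cmin * ((k : ℝ) + 1) ^ (-a) ≤ lam k ∧ lam k ≤ cmax * ((k : ℝ) + 1) ^ (-a)) :
    cutoffVariance lam α ≤ cmin⁻¹ * cmax ^ ((a + 1) / a) * α ^ (-(a + 1) / a) := by
  set M := (cmax / α) ^ a⁻¹
  have hM : 0 ≤ M := by positivity
  have hterm : ∀ k ∈ range ⌊M⌋₊, lam k * cutoffFilter α (lam k) ^ 2 ≤ cmin⁻¹ * M ^ a := by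
    intro k hk
    have hkM : (k : ℝ) + 1 ≤ M := by exact_mod_cast (Nat.le_floor_iff hM).1 (mem_range.1 hk)
    have hlam : 0 < lam k := lt_of_lt_of_le (by positivity) (hl k).1
    calc lam k * cutoffFilter α (lam k) ^ 2 ≤ (lam k)⁻¹ := by
          rw [mul_cutoffFilter_sq]
          split_ifs
          exacts [le_rfl, by positivity]
      _ ≤ cmin⁻¹ * ((k : ℝ) + 1) ^ a := by
          rw [← inv_mul_rpow_neg a (by positivity)]
          exact inv_anti₀ (by positivity) (hl k).1
      _ ≤ cmin⁻¹ * M ^ a := by gcongr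
  calc cutoffVariance lam α
      = ∑ k ∈ range ⌊M⌋₊, lam k * cutoffFilter α (lam k) ^ 2 :=
        cutoffVariance_eq_sum hα ha hcmax fun k ↦ (hl k).2
    _ ≤ ⌊M⌋₊ * (cmin⁻¹ * M ^ a) := by simpa using sum_le_card_nsmul _ _ _ hterm
    _ ≤ M * (cmin⁻¹ * M ^ a) := by gcongr; exact Nat.floor_le hM
    _ = cmin⁻¹ * M ^ (a + 1) := by rw [rpow_add' hM (by linarith), rpow_one]; ring
    _ = cmin⁻¹ * cmax ^ ((a + 1) / a) * α ^ (-(a + 1) / a) := by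
        rw [div_rpow_inv_rpow_add_one hcmax hα.le]; ring

lemma le_cutoffVariance (hα : 0 < α) (hαc : α ≤ cmin) (ha : 0 < a) (hcmin : 0 < cmin)
    (hcmax : 0 ≤ cmax)
    (hl : ∀ k : ℕ, cmin * ((k : ℝ) + 1) ^ (-a) ≤ lam k ∧ lam k ≤ cmax * ((k : ℝ) + 1) ^ (-a)) :
    cmax⁻¹ * cmin ^ ((a + 1) / a) / (2 ^ (a + 1) * (a + 1)) * α ^ (-(a + 1) / a) ≤
      cutoffVariance lam α := by
  set m := (cmin / α) ^ a⁻¹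
  have hm : 1 ≤ m := one_le_rpow ((one_le_div hα).2 hαc) (by positivity)
  have hterm : ∀ k ∈ range ⌊m⌋₊,
      cmax⁻¹ * ((k : ℝ) + 1) ^ a ≤ lam k * cutoffFilter α (lam k) ^ 2 := by
    intro k hk
    have hkm : (k : ℝ) + 1 ≤ m := by
      exact_mod_cast (Nat.le_floor_iff (by positivity)).1 (mem_range.1 hk)
    have hαk : α ≤ lam k :=
      ((le_mul_rpow_neg_iff hα hcmin.le ha (by positivity)).2 hkm).trans (hl k).1
    rw [mul_cutoffFilter_sq, if_pos hαk, ← inv_mul_rpow_neg a (by positivity)]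
    exact inv_anti₀ (hα.trans_le hαk) (hl k).2
  calc cmax⁻¹ * cmin ^ ((a + 1) / a) / (2 ^ (a + 1) * (a + 1)) * α ^ (-(a + 1) / a)
      = cmax⁻¹ * ((m / 2) ^ (a + 1) / (a + 1)) := by
        rw [div_rpow (by positivity) (by norm_num), div_rpow_inv_rpow_add_one hcmin.le hα.le,
          ← div_div]
        ring
    _ ≤ cmax⁻¹ * ((⌊m⌋₊ : ℝ) ^ (a + 1) / (a + 1)) := by
        gcongr
        exact half_le_natFloor hm
    _ ≤ cmax⁻¹ * ∑ k ∈ range ⌊m⌋₊, ((k : ℝ) + 1) ^ a := by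
        gcongr
        exact rpow_add_one_div_le_sum_range ha.le _
    _ ≤ ∑ k ∈ range ⌊m⌋₊, lam k * cutoffFilter α (lam k) ^ 2 := by
        rw [mul_sum]
        exact sum_le_sum hterm
    _ ≤ cutoffVariance lam α := by
        have hlam (k : ℕ) : 0 ≤ lam k := le_trans (by positivity) (hl k).1
        exact Summable.sum_le_tsum _ (fun k _ ↦ mul_nonneg (hlam k) (sq_nonneg _))
          (summable_mul_cutoffFilter_sq hα ha hcmax fun k ↦ (hl k).2)

end

theorem solit_mild_cutoff_variance_general (lam : ℕ → ℝ) (a cmin cmax : ℝ)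
    (ha : 1 < a) (h0 : 0 < cmin)
    (hl : ∀ k : ℕ, cmin * ((k : ℝ) + 1) ^ (-a) ≤ lam k ∧
      lam k ≤ cmax * ((k : ℝ) + 1) ^ (-a)) :
    ∃ c C : ℝ, 0 < c ∧ c ≤ C ∧ ∃ α₀ > (0:ℝ), ∀ α : ℝ, 0 < α → α ≤ α₀ →
      c * α ^ (-(a + 1) / a) ≤ (∑' k, lam k * (cutoffFilter α (lam k)) ^ 2) ∧
      (∑' k, lam k * (cutoffFilter α (lam k)) ^ 2) ≤ C * α ^ (-(a + 1) / a) := by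
  have ha0 : 0 < a := by linarith
  have hc : cmin ≤ cmax := by simpa using (hl 0).1.trans (hl 0).2
  have hcmax : 0 < cmax := h0.trans_le hc
  have hbounds : ∀ α : ℝ, 0 < α → α ≤ cmin →
      cmax⁻¹ * cmin ^ ((a + 1) / a) / (2 ^ (a + 1) * (a + 1)) * α ^ (-(a + 1) / a) ≤
        cutoffVariance lam α ∧
      cutoffVariance lam α ≤ cmin⁻¹ * cmax ^ ((a + 1) / a) * α ^ (-(a + 1) / a) :=
    fun α hα hαc ↦ ⟨le_cutoffVariance hα hαc ha0 h0 hcmax.le hl,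
      cutoffVariance_le hα ha0 h0 hcmax.le hl⟩
  refine ⟨_, _, by positivity, ?_, cmin, h0, hbounds⟩
  obtain ⟨hlow, hup⟩ := hbounds cmin h0 le_rfl
  exact le_of_mul_le_mul_right (hlow.trans hup) (rpow_pos_of_pos h0 _)

/-- In the mildly ill-posed case (`λ_k ≍ k^{-a}`, `a > 1`), the variance
of spectral cutoff is of order `α^{-(a+1)/a}` for all sufficiently small `α`. -/
theorem solit_mild_cutoff_variance (lam : ℕ → ℝ) (a cmin cmax : ℝ)
    (ha : 1 < a) (h0 : 0 < cmin) (hc : cmin ≤ cmax)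
    (hl : ∀ k : ℕ, cmin * ((k : ℝ) + 1) ^ (-a) ≤ lam k ∧
      lam k ≤ cmax * ((k : ℝ) + 1) ^ (-a)) :
    ∃ c C : ℝ, 0 < c ∧ c ≤ C ∧ ∃ α₀ > (0:ℝ), ∀ α : ℝ, 0 < α → α ≤ α₀ →
      c * α ^ (-(a + 1) / a) ≤ (∑' k, lam k * (cutoffFilter α (lam k)) ^ 2) ∧
      (∑' k, lam k * (cutoffFilter α (lam k)) ^ 2) ≤ C * α ^ (-(a + 1) / a) :=
  solit_mild_cutoff_variance_general lam a cmin cmax ha h0 hl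
end

section
/- Assume severe ill-posedness: $\lambda_k = k^a \exp(-bk^\vartheta)$ with $b > 0$, $\vartheta > 1$ and $a \in \mathbb{R}$. Then for spectral cutoff, the variance sums $V(n) = \sum_{k=1}^n 1/\lambda_k$ satisfy $\lim_{n \to \infty} V(n)/V(n-1) = \infty$; in particular no sequence of candidate parameters with geometrically bounded variance ratios exists. -/
open Filter Real

lemma aux_tendsto (b c d : ℝ) (hb : 0 < b) (hc : 0 < c) (hd : 0 ≤ d) :
    Tendsto (fun n : ℕ => Real.exp (b * (n : ℝ) ^ c) / ((n : ℝ) + 1) ^ d) atTop atTop := by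
  have h1 : Tendsto (fun x : ℝ => Real.exp (b * x) / x ^ (d / c)) atTop atTop :=
    tendsto_exp_mul_div_rpow_atTop _ b hb
  have h2 : Tendsto (fun x : ℝ => Real.exp (b * x ^ c) / x ^ d) atTop atTop := by
    refine (h1.comp (tendsto_rpow_atTop hc)).congr' ?_
    filter_upwards [eventually_gt_atTop (0:ℝ)] with x hx
    simp only [Function.comp_apply]
    rw [← Real.rpow_mul hx.le, mul_div_cancel₀ _ hc.ne']
  have h3 : Tendsto (fun x : ℝ => (2:ℝ) ^ (-d) * (Real.exp (b * x ^ c) / x ^ d)) atTop atTop :=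
    h2.const_mul_atTop (Real.rpow_pos_of_pos two_pos _)
  have h4 : Tendsto (fun x : ℝ => Real.exp (b * x ^ c) / (x + 1) ^ d) atTop atTop := by
    refine tendsto_atTop_mono' _ ?_ h3
    filter_upwards [eventually_ge_atTop (1:ℝ)] with x hx
    have hx0 : (0:ℝ) < x := by linarith
    have h1 : (x + 1) ^ d ≤ (2:ℝ) ^ d * x ^ d := by
      rw [← Real.mul_rpow (by norm_num) hx0.le]
      exact Real.rpow_le_rpow (by linarith) (by linarith) hd
    rw [Real.rpow_neg (by norm_num), ← div_eq_inv_mul, div_div]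
    have hpos : (0:ℝ) < (x + 1) ^ d := Real.rpow_pos_of_pos (by linarith) _
    gcongr
    rw [mul_comm]; exact h1
  exact h4.comp tendsto_natCast_atTop_atTop

lemma pow_split (θ : ℝ) (hθ : 1 < θ) : ∀ x : ℝ, 1 ≤ x → x ^ (θ-1) + x ^ θ ≤ (x+1) ^ θ := by
  intro x hx
  have hx0 : (0:ℝ) < x := by linarith
  have hx1 : (0:ℝ) < x + 1 := by linarith
  have e1 : (x+1) ^ (θ-1) * (x+1) = (x+1) ^ θ := by
    nth_rewrite 2 [← Real.rpow_one (x+1)]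
    rw [← Real.rpow_add hx1]; ring_nf
  have e2 : x ^ (θ-1) * x = x ^ θ := by
    nth_rewrite 2 [← Real.rpow_one x]
    rw [← Real.rpow_add hx0]; ring_nf
  have h3 : x ^ (θ-1) ≤ (x+1) ^ (θ-1) := Real.rpow_le_rpow hx0.le (by linarith) (by linarith)
  nlinarith [mul_le_mul_of_nonneg_right h3 hx1.le]

/-- Under severe ill-posedness with `ϑ > 1`, the variance sums
`V(n) = ∑_{k=1}^n 1/λ_k` for spectral cutoff satisfy `V(n)/V(n-1) → ∞`. -/
theorem solit_severe_variance_ratio_blows_up (a b θ : ℝ) (hb : 0 < b) (hθ : 1 < θ) :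
    Tendsto
      (fun n : ℕ =>
        (∑ k ∈ Finset.Icc 1 (n + 1),
            1 / ((k : ℝ) ^ a * Real.exp (-b * (k : ℝ) ^ θ))) /
        (∑ k ∈ Finset.Icc 1 n,
            1 / ((k : ℝ) ^ a * Real.exp (-b * (k : ℝ) ^ θ))))
      atTop atTop := by
  set f : ℕ → ℝ := fun k => 1 / ((k : ℝ) ^ a * Real.exp (-b * (k : ℝ) ^ θ)) with hf
  have hfe : ∀ k : ℕ, 1 ≤ k → f k = (k:ℝ) ^ (-a) * Real.exp (b * (k:ℝ) ^ θ) := by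
    intro k hk
    have hk0 : (0:ℝ) < k := by exact_mod_cast hk
    rw [hf]
    simp only
    rw [one_div, mul_inv, ← Real.exp_neg, ← Real.rpow_neg hk0.le, neg_mul, neg_neg]
  have hfpos : ∀ k : ℕ, 1 ≤ k → 0 < f k := by
    intro k hk
    have hk0 : (0:ℝ) < k := by exact_mod_cast hk
    rw [hfe k hk]; positivity
  have hSpos : ∀ n : ℕ, 1 ≤ n → 0 < ∑ k ∈ Finset.Icc 1 n, f k := by
    intro n hn
    apply Finset.sum_pos
    · intro k hk; exact hfpos k (Finset.mem_Icc.mp hk).1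
    · exact ⟨1, Finset.mem_Icc.mpr ⟨le_refl 1, hn⟩⟩
  have hS_le : ∀ n : ℕ, 1 ≤ n →
      (∑ k ∈ Finset.Icc 1 n, f k) ≤ (n:ℝ) * ((n:ℝ) ^ |a| * Real.exp (b * (n:ℝ) ^ θ)) := by
    intro n hn
    have hn0 : (0:ℝ) < n := by exact_mod_cast hn
    have hterm : ∀ k ∈ Finset.Icc 1 n, f k ≤ (n:ℝ) ^ |a| * Real.exp (b * (n:ℝ) ^ θ) := by
      intro k hk
      obtain ⟨hk1, hkn⟩ := Finset.mem_Icc.mp hk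
      have hk0 : (0:ℝ) < k := by exact_mod_cast hk1
      have hk1' : (1:ℝ) ≤ k := by exact_mod_cast hk1
      have hkn' : (k:ℝ) ≤ n := by exact_mod_cast hkn
      rw [hfe k hk1]
      have h1 : (k:ℝ) ^ (-a) ≤ (n:ℝ) ^ |a| :=
        le_trans (Real.rpow_le_rpow_of_exponent_le hk1' (neg_le_abs a))
          (Real.rpow_le_rpow hk0.le hkn' (abs_nonneg a))
      have h2 : Real.exp (b * (k:ℝ)^θ) ≤ Real.exp (b * (n:ℝ)^θ) := by
        apply Real.exp_le_exp.mpr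
        have := Real.rpow_le_rpow hk0.le hkn' (by linarith : (0:ℝ) ≤ θ)
        nlinarith
      exact mul_le_mul h1 h2 (Real.exp_pos _).le (Real.rpow_nonneg hn0.le _)
    calc (∑ k ∈ Finset.Icc 1 n, f k)
        ≤ (Finset.Icc 1 n).card • ((n:ℝ)^|a| * Real.exp (b*(n:ℝ)^θ)) :=
          Finset.sum_le_card_nsmul _ _ _ hterm
      _ = (n:ℝ) * ((n:ℝ)^|a| * Real.exp (b*(n:ℝ)^θ)) := by
          rw [Nat.card_Icc, nsmul_eq_mul]; norm_num
  -- key eventual lower bound for the ratio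
  refine tendsto_atTop_mono' atTop ?_
    (aux_tendsto b (θ-1) (1+2*|a|) hb (by linarith) (by positivity))
  filter_upwards [eventually_ge_atTop 1] with n hn
  have hn0 : (0:ℝ) < n := by exact_mod_cast hn
  have hn1 : (1:ℝ) ≤ n := by exact_mod_cast hn
  have hSn := hSpos n hn
  have hSn1 := hSpos (n+1) (by omega)
  have hsplit : (∑ k ∈ Finset.Icc 1 (n+1), f k) = (∑ k ∈ Finset.Icc 1 n, f k) + f (n+1) :=
    Finset.sum_Icc_succ_top (by omega) f
  have hfn1 := hfpos (n+1) (by omega)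
  -- step 2: lower bound f(n+1)/S n
  have step2 : Real.exp (b * (n:ℝ)^(θ-1)) / ((n:ℝ)+1)^(1+2*|a|)
      ≤ f (n+1) / (∑ k ∈ Finset.Icc 1 n, f k) := by
    rw [div_le_div_iff₀ (Real.rpow_pos_of_pos (by linarith) _) hSn]
    have key : Real.exp (b * (n:ℝ)^(θ-1)) * ((n:ℝ) * ((n:ℝ)^|a| * Real.exp (b*(n:ℝ)^θ)))
        ≤ f (n+1) * ((n:ℝ)+1)^(1+2*|a|) := by
      have hfn1e : f (n+1) = ((n:ℝ)+1) ^ (-a) * Real.exp (b * ((n:ℝ)+1) ^ θ) := by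
        rw [hfe (n+1) (by omega)]; push_cast; ring_nf
      rw [hfn1e]
      have hrhs : ((n:ℝ)+1) ^ (-a) * Real.exp (b * ((n:ℝ)+1)^θ) * ((n:ℝ)+1)^(1+2*|a|)
          ≥ ((n:ℝ)+1) ^ (1+|a|) * Real.exp (b * ((n:ℝ)+1)^θ) := by
        rw [mul_comm (((n:ℝ)+1) ^ (-a) * _), ← mul_assoc, ← Real.rpow_add (by linarith)]
        have : ((n:ℝ)+1) ^ (1+2*|a| + -a) ≥ ((n:ℝ)+1) ^ (1+|a|) := by
          apply Real.rpow_le_rpow_of_exponent_le (by linarith)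
          linarith [le_abs_self a]
        nlinarith [Real.exp_pos (b * ((n:ℝ)+1)^θ), this]
      refine le_trans ?_ hrhs
      have hlhs : Real.exp (b * (n:ℝ)^(θ-1)) * ((n:ℝ) * ((n:ℝ)^|a| * Real.exp (b*(n:ℝ)^θ)))
          = (n:ℝ) ^ (1+|a|) * Real.exp (b * ((n:ℝ)^(θ-1) + (n:ℝ)^θ)) := by
        rw [Real.rpow_add hn0, Real.rpow_one, mul_add, Real.exp_add]
        ring
      rw [hlhs]
      apply mul_le_mul
      · exact Real.rpow_le_rpow hn0.le (by linarith) (by positivity)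
      · apply Real.exp_le_exp.mpr
        have := pow_split θ hθ (n:ℝ) hn1
        nlinarith
      · exact (Real.exp_pos _).le
      · positivity
    calc Real.exp (b * (n:ℝ)^(θ-1)) * (∑ k ∈ Finset.Icc 1 n, f k)
        ≤ Real.exp (b * (n:ℝ)^(θ-1)) * ((n:ℝ) * ((n:ℝ)^|a| * Real.exp (b*(n:ℝ)^θ))) := by
          exact mul_le_mul_of_nonneg_left (hS_le n hn) (Real.exp_pos _).le
      _ ≤ f (n+1) * ((n:ℝ)+1)^(1+2*|a|) := key
  -- step 1
  have step1 : f (n+1) / (∑ k ∈ Finset.Icc 1 n, f k)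
      ≤ (∑ k ∈ Finset.Icc 1 (n+1), f k) / (∑ k ∈ Finset.Icc 1 n, f k) := by
    gcongr
    rw [hsplit]; linarith
  calc Real.exp (b * (n:ℝ)^(θ-1)) / ((n:ℝ)+1)^(1+2*|a|)
      ≤ f (n+1) / (∑ k ∈ Finset.Icc 1 n, f k) := step2
    _ ≤ _ := step1
end

section
/- Let risks be given by $\mathcal{R}_m = v_m + b_m^2$ where $(v_m)$ is increasing with $v_m/v_{m-1} \le \theta_2$ and $(b_m)$ is decreasing. Define $m_{**} = \min\{m : b_m^2 \le c\, v_m\}$ for some $c > 0$ (assumed to exist) and let $m_\diamond$ be any index. Then $\mathcal{R}_{m_{**}} \le (1 + \max\{c, \theta_2/c\})\, \mathcal{R}_{m_\diamond}$. -/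
/-- Abstract core of Step 3 of the comparison-of-oracles theorem:
with `R_m = v_m + b_m²`, `m_{**}` the first index with `b_m² ≤ c v_m`, one has
`R_{m_{**}} ≤ (1 + max{c, θ₂/c}) R_{m_⋄}` for any index `m_⋄`. -/
theorem solit_oracle_comparison_step3 (v b : ℕ → ℝ) (θ₂ c : ℝ) (mss md : ℕ)
    (hv_pos : ∀ m, 0 < v m)
    (hv_mono : Monotone v)
    (hv_ratio : ∀ m : ℕ, v (m + 1) / v m ≤ θ₂)
    (hb_nonneg : ∀ m, 0 ≤ b m)
    (hb_anti : Antitone b)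
    (hc : 0 < c)
    (hmss : (b mss) ^ 2 ≤ c * v mss)
    (hmin : ∀ m < mss, ¬ ((b m) ^ 2 ≤ c * v m)) :
    v mss + (b mss) ^ 2 ≤ (1 + max c (θ₂ / c)) * (v md + (b md) ^ 2) := by
  have hbmd : 0 ≤ (b md) ^ 2 := sq_nonneg _
  rcases le_or_gt mss md with h | h
  · -- R_mss ≤ (1+c) v mss ≤ (1+c) v md ≤ RHS
    have h1 : v mss + (b mss) ^ 2 ≤ (1 + c) * v mss := by nlinarith
    calc v mss + (b mss) ^ 2 ≤ (1 + c) * v mss := h1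
      _ ≤ (1 + c) * v md := by
          have := hv_mono h
          nlinarith
      _ ≤ (1 + max c (θ₂ / c)) * (v md + (b md) ^ 2) := by
          have hmax : c ≤ max c (θ₂ / c) := le_max_left _ _
          have hvmd := (hv_pos md).le
          have hmaxnn : (0:ℝ) ≤ max c (θ₂ / c) := le_trans hc.le hmax
          nlinarith
  · -- md < mss, so mss ≥ 1
    obtain ⟨k, rfl⟩ : ∃ k, mss = k + 1 := ⟨mss - 1, by omega⟩
    have hk : c * v k < (b k) ^ 2 := lt_of_not_ge (hmin k (Nat.lt_succ_self k))
    have hmd : c * v md < (b md) ^ 2 := lt_of_not_ge (hmin md h)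
    have hbk : (b k) ^ 2 ≤ (b md) ^ 2 := by
      have := hb_anti (Nat.le_of_lt_succ h)
      nlinarith [hb_nonneg k, hb_nonneg md]
    have hbss : (b (k+1)) ^ 2 ≤ (b md) ^ 2 := by
      have := hb_anti (Nat.le_of_lt h)
      nlinarith [hb_nonneg (k+1), hb_nonneg md]
    have hratio := hv_ratio k
    have hvk := hv_pos k
    have hvk1 := hv_pos (k+1)
    have hθ : v (k+1) ≤ θ₂ * v k := by
      have := (div_le_iff₀ hvk).mp hratio
      linarith
    -- v (k+1) ≤ (θ₂/c) * b k ^2 ≤ (θ₂/c) * b md ^2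
    have hθpos : 0 < θ₂ := by
      have := (div_le_iff₀ hvk).mp hratio
      nlinarith
    have h2 : v (k+1) ≤ (θ₂ / c) * (b md) ^ 2 := by
      have h3 : c * v (k+1) ≤ θ₂ * (b md) ^ 2 := by nlinarith
      rw [div_mul_eq_mul_div, le_div_iff₀ hc]
      linarith
    have hmax : θ₂ / c ≤ max c (θ₂ / c) := le_max_right _ _
    have hmaxnn : (0:ℝ) ≤ max c (θ₂ / c) := le_trans (by positivity) hmax
    have hvmd := (hv_pos md).le
    nlinarith
end

section
/- Let $\Sigma : (0,\lambda_1] \to \mathbb{N}_0$ be the counting function of a decreasing positive sequence $(\lambda_k)$ with $\lim_{x\to 0} x\Sigma(x) = 0$, and let $q_\alpha$ be an ordered filter with constants $C_q = \max\{C_q', 1\}$ so that $q_\alpha(x) \le C_q \min\{1/\alpha, 1/x\}$. If additionally $\frac{1}{\alpha}\int_0^\alpha \Sigma(t)\,dt \le C_S S(\alpha)$, then $\sum_{k=1}^\infty \lambda_k q_\alpha(\lambda_k)^2 \le C_S C_q^2\, S(\alpha)/\alpha$. -/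
open Filter MeasureTheory ENNReal

/-- Key integral identity: `∫ t in (0,α], Σ(t) dt = ∑ₖ min (lam k) α`. -/
lemma solit_integral_counting (lam : ℕ → ℝ) (α : ℝ) (hα : 0 < α)
    (hlam_pos : ∀ k, 0 < lam k) (hlam_sum : Summable lam) :
    (∫ t in Set.Ioc 0 α, ((Nat.card {k : ℕ | t ≤ lam k} : ℝ)))
      = ∑' k, min (lam k) α := by
  -- finiteness of the counting sets
  have hfin : ∀ t : ℝ, 0 < t → ({k : ℕ | t ≤ lam k}).Finite := by
    intro t ht
    have h0 : Tendsto lam atTop (nhds 0) := hlam_sum.tendsto_atTop_zero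
    have : ∀ᶠ k in atTop, lam k < t := h0.eventually (Filter.Tendsto.eventually_lt_const ht tendsto_id)
    obtain ⟨N, hN⟩ := this.exists_forall_of_atTop
    exact (Set.finite_Iio N).subset (fun k hk => by
      simp only [Set.mem_Iio]
      by_contra h
      exact absurd hk (not_le.mpr (hN k (le_of_not_gt h))))
  set Sig : ℝ → ℝ := fun t => (Nat.card {k : ℕ | t ≤ lam k} : ℝ) with hSig
  -- a.e. measurability via antitonicity on (0, α]
  have hanti : AntitoneOn Sig (Set.Ioc 0 α) := by
    intro s hs t ht hst
    have hsub : {k : ℕ | t ≤ lam k} ⊆ {k : ℕ | s ≤ lam k} :=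
      fun k hk => le_trans hst hk
    simp only [hSig]
    exact_mod_cast Nat.card_mono (hfin s hs.1) hsub
  have hmeas : AEMeasurable Sig (volume.restrict (Set.Ioc 0 α)) :=
    aemeasurable_restrict_of_antitoneOn measurableSet_Ioc hanti
  have hnn : 0 ≤ᵐ[volume.restrict (Set.Ioc 0 α)] Sig :=
    Filter.Eventually.of_forall fun t => by positivity
  rw [integral_eq_lintegral_of_nonneg_ae hnn hmeas.aestronglyMeasurable]
  -- compute the lintegral
  have hae : ∀ᵐ t ∂(volume.restrict (Set.Ioc 0 α)),
      ENNReal.ofReal (Sig t)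
        = ∑' k, (Set.Iic (lam k)).indicator (fun _ => (1 : ℝ≥0∞)) t := by
    filter_upwards [ae_restrict_mem measurableSet_Ioc] with t ht
    have hft := hfin t ht.1
    have h1 : (∑' k, (Set.Iic (lam k)).indicator (fun _ => (1 : ℝ≥0∞)) t)
        = ∑ k ∈ hft.toFinset, (Set.Iic (lam k)).indicator (fun _ => (1 : ℝ≥0∞)) t := by
      apply tsum_eq_sum
      intro k hk
      have hk' : ¬ t ≤ lam k := by simpa using hk
      simp [Set.indicator_of_notMem, Set.mem_Iic, hk']
    have h2 : ∀ k ∈ hft.toFinset, (Set.Iic (lam k)).indicator (fun _ => (1 : ℝ≥0∞)) t = 1 := by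
      intro k hk
      have hk' : t ≤ lam k := by simpa using hk
      simp [Set.indicator_of_mem, Set.mem_Iic, hk']
    rw [h1, Finset.sum_congr rfl h2, Finset.sum_const, nsmul_eq_mul, mul_one]
    have hcard : Nat.card {k : ℕ | t ≤ lam k} = hft.toFinset.card := by
      rw [Nat.card_coe_set_eq, Set.ncard_eq_toFinset_card _ hft]
    rw [hSig]
    simp only [hcard]
    rw [ENNReal.ofReal_natCast]
  rw [lintegral_congr_ae hae, lintegral_tsum (fun k =>
    ((measurable_const.indicator measurableSet_Iic).aemeasurable))]
  have hterm : ∀ k, (∫⁻ t in Set.Ioc 0 α,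
      (Set.Iic (lam k)).indicator (fun _ => (1 : ℝ≥0∞)) t)
        = ENNReal.ofReal (min (lam k) α) := by
    intro k
    rw [lintegral_indicator measurableSet_Iic, setLIntegral_one,
      Measure.restrict_apply measurableSet_Iic]
    have : Set.Iic (lam k) ∩ Set.Ioc 0 α = Set.Ioc 0 (min (lam k) α) := by
      ext x
      simp only [Set.mem_inter_iff, Set.mem_Iic, Set.mem_Ioc, le_min_iff]
      tauto
    rw [this, Real.volume_Ioc, sub_zero]
  simp only [hterm]
  have hmin_nn : ∀ k, 0 ≤ min (lam k) α := fun k => le_min (hlam_pos k).le hα.le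
  have hmin_sum : Summable fun k => min (lam k) α :=
    hlam_sum.of_nonneg_of_le hmin_nn (fun k => min_le_left _ _)
  rw [← ENNReal.ofReal_tsum_of_nonneg hmin_nn hmin_sum,
    ENNReal.toReal_ofReal (tsum_nonneg hmin_nn)]

/-- simplified form: variance bound via the smooth surrogate:
if `(1/α)∫₀^α Σ ≤ C_S S(α)` then `∑ λ_k q(λ_k)² ≤ C_S C_q² S(α)/α`. -/
theorem solit_variance_surrogate_bound (lam : ℕ → ℝ) (q : ℝ → ℝ)
    (Cq CS Sα α : ℝ) (hα : 0 < α)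
    (hlam_pos : ∀ k, 0 < lam k) (hlam_dec : Antitone lam)
    (hlam_sum : Summable lam)
    (hSigma : Tendsto (fun x : ℝ => x * (Nat.card {k : ℕ | x ≤ lam k} : ℝ))
      (nhdsWithin 0 (Set.Ioi 0)) (nhds 0))
    (hCq : 1 ≤ Cq)
    (hq_nonneg : ∀ k, 0 ≤ q (lam k))
    (hq_le : ∀ k, q (lam k) ≤ Cq * min (1 / α) (1 / lam k))
    (hsurr : (1 / α) *
        (∫ t in Set.Ioc 0 α, ((Nat.card {k : ℕ | t ≤ lam k} : ℝ))) ≤ CS * Sα) :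
    (∑' k, lam k * (q (lam k)) ^ 2) ≤ CS * Cq ^ 2 * Sα / α := by
  have hint := solit_integral_counting lam α hα hlam_pos hlam_sum
  -- termwise bound
  have hterm : ∀ k, lam k * (q (lam k)) ^ 2 ≤ Cq ^ 2 / α ^ 2 * min (lam k) α := by
    intro k
    have hl := hlam_pos k
    have h1 : lam k * (q (lam k)) ^ 2 ≤ lam k * (Cq * min (1 / α) (1 / lam k)) ^ 2 := by
      apply mul_le_mul_of_nonneg_left _ hl.le
      exact pow_le_pow_left₀ (hq_nonneg k) (hq_le k) 2
    refine h1.trans ?_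
    rcases le_total (lam k) α with h | h
    · have hmin : min (1 / α) (1 / lam k) = 1 / α := min_eq_left (by
        apply one_div_le_one_div_of_le hl h)
      rw [hmin, min_eq_left h]
      apply le_of_eq
      field_simp
    · have hmin : min (1 / α) (1 / lam k) = 1 / lam k := min_eq_right (by
        apply one_div_le_one_div_of_le hα h)
      rw [hmin, min_eq_right h]
      have h2 : lam k * (Cq * (1 / lam k)) ^ 2 = Cq ^ 2 / lam k := by
        field_simp
      have h3 : Cq ^ 2 / α ^ 2 * α = Cq ^ 2 / α := by
        field_simp
      rw [h2, h3]
      exact div_le_div_of_nonneg_left (by positivity) hα h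
  have hmin_nn : ∀ k, 0 ≤ min (lam k) α := fun k => le_min (hlam_pos k).le hα.le
  have hmin_sum : Summable fun k => min (lam k) α :=
    hlam_sum.of_nonneg_of_le hmin_nn (fun k => min_le_left _ _)
  have hrhs_sum : Summable fun k => Cq ^ 2 / α ^ 2 * min (lam k) α :=
    hmin_sum.mul_left _
  have hsum_le : (∑' k, lam k * (q (lam k)) ^ 2)
      ≤ ∑' k, Cq ^ 2 / α ^ 2 * min (lam k) α := by
    apply Summable.tsum_le_tsum hterm _ hrhs_sum
    exact hrhs_sum.of_nonneg_of_le (fun k => mul_nonneg (hlam_pos k).le (sq_nonneg _)) hterm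
  refine hsum_le.trans ?_
  rw [tsum_mul_left, ← hint]
  -- now: Cq²/α² * ∫ ≤ CS * Cq² * Sα / α
  have hI_nn : 0 ≤ ∫ t in Set.Ioc 0 α, ((Nat.card {k : ℕ | t ≤ lam k} : ℝ)) := by
    apply integral_nonneg
    intro t; exact Nat.cast_nonneg _
  have : Cq ^ 2 / α ^ 2 * (∫ t in Set.Ioc 0 α, ((Nat.card {k : ℕ | t ≤ lam k} : ℝ)))
      = (Cq ^ 2 / α) * ((1 / α) * (∫ t in Set.Ioc 0 α, ((Nat.card {k : ℕ | t ≤ lam k} : ℝ)))) := by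
    ring
  rw [this]
  calc (Cq ^ 2 / α) * ((1 / α) * _) ≤ (Cq ^ 2 / α) * (CS * Sα) :=
        mul_le_mul_of_nonneg_left hsurr (by positivity)
    _ = CS * Cq ^ 2 * Sα / α := by ring
end
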